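/- Orthogonal rank is invariant under orthogonal multilinear multiplication: if A ∈ ℝ^{I₁ × ⋯ × I_N} and M_n ∈ ℝ^{Iₙ × Iₙ} is an orthogonal matrix for each n = 1, …, N, then rank_⊥((M₁, …, M_N)·A) = rank_⊥(A), where (M₁,…,M_N)·A denotes applying M_n along mode n for every n. -/

import Mathlib

open scoped BigOperators Matrix

/-- The outer product of vectors `v n ∈ ℝ^{I n}`. -/
noncomputable def outer {N : ℕ} {I : Fin N → ℕ}
    (v : (n : Fin N) → EuclideanSpace ℝ (Fin (I n))) :
    EuclideanSpace ℝ ((n : Fin N) → Fin (I n)) :=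
  (WithLp.equiv 2 _).symm (fun i => ∏ n, v n (i n))

/-- The orthogonal rank. -/
noncomputable def orank {N : ℕ} {I : Fin N → ℕ}
    (A : EuclideanSpace ℝ ((n : Fin N) → Fin (I n))) : ℕ :=
  sInf {R : ℕ | ∃ v : Fin R → (n : Fin N) → EuclideanSpace ℝ (Fin (I n)),
    A = ∑ r, outer (v r) ∧
    ∀ s t : Fin R, s ≠ t → (inner ℝ (outer (v s)) (outer (v t)) : ℝ) = 0}

/-- Multilinear (mode-wise) multiplication `(M₁,…,M_N)·A`: the matrix `M n` acts
along mode `n` for every `n`. -/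
noncomputable def mlMul {N : ℕ} {I : Fin N → ℕ}
    (M : (n : Fin N) → Matrix (Fin (I n)) (Fin (I n)) ℝ)
    (A : EuclideanSpace ℝ ((n : Fin N) → Fin (I n))) :
    EuclideanSpace ℝ ((n : Fin N) → Fin (I n)) :=
  (WithLp.equiv 2 _).symm
    (fun i => ∑ j : (n : Fin N) → Fin (I n), (∏ n, M n (i n) (j n)) * A j)

section Aux

variable {N : ℕ} {I : Fin N → ℕ}

/-- Matrix-vector multiplication on EuclideanSpace. -/
noncomputable def matVec {m : ℕ} (M : Matrix (Fin m) (Fin m) ℝ)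
    (v : EuclideanSpace ℝ (Fin m)) : EuclideanSpace ℝ (Fin m) :=
  (WithLp.equiv 2 _).symm (fun i => ∑ j, M i j * v j)

lemma outer_apply (v : (n : Fin N) → EuclideanSpace ℝ (Fin (I n)))
    (i : (n : Fin N) → Fin (I n)) : outer v i = ∏ n, v n (i n) := rfl

lemma mlMul_apply (M : (n : Fin N) → Matrix (Fin (I n)) (Fin (I n)) ℝ)
    (A : EuclideanSpace ℝ ((n : Fin N) → Fin (I n))) (i : (n : Fin N) → Fin (I n)) :
    mlMul M A i = ∑ j : (n : Fin N) → Fin (I n), (∏ n, M n (i n) (j n)) * A j := rfl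

lemma matVec_apply {m : ℕ} (M : Matrix (Fin m) (Fin m) ℝ)
    (v : EuclideanSpace ℝ (Fin m)) (i : Fin m) : matVec M v i = ∑ j, M i j * v j := rfl

lemma mlMul_outer (M : (n : Fin N) → Matrix (Fin (I n)) (Fin (I n)) ℝ)
    (v : (n : Fin N) → EuclideanSpace ℝ (Fin (I n))) :
    mlMul M (outer v) = outer (fun n => matVec (M n) (v n)) := by
  ext i
  rw [mlMul_apply, outer_apply]
  simp only [matVec_apply, outer_apply]
  rw [Finset.prod_univ_sum]
  rw [Fintype.piFinset_univ]
  refine Finset.sum_congr rfl fun j _ => ?_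
  rw [Finset.prod_mul_distrib]

lemma mlMul_sum {R : ℕ} (M : (n : Fin N) → Matrix (Fin (I n)) (Fin (I n)) ℝ)
    (f : Fin R → EuclideanSpace ℝ ((n : Fin N) → Fin (I n))) :
    mlMul M (∑ r, f r) = ∑ r, mlMul M (f r) := by
  ext i
  have hsum : ∀ (g : Fin R → EuclideanSpace ℝ ((n : Fin N) → Fin (I n)))
      (j : (n : Fin N) → Fin (I n)), (∑ r, g r) j = ∑ r, g r j := by
    intro g j
    induction (Finset.univ : Finset (Fin R)) using Finset.induction with
    | empty => rfl
    | insert _ _ h ih => rw [Finset.sum_insert h, Finset.sum_insert h, ← ih]; rfl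
  rw [hsum, mlMul_apply]
  simp only [mlMul_apply, hsum]
  rw [Finset.sum_comm]
  refine Finset.sum_congr rfl fun j _ => ?_
  rw [Finset.mul_sum]

lemma inner_outer (v w : (n : Fin N) → EuclideanSpace ℝ (Fin (I n))) :
    (inner ℝ (outer v) (outer w) : ℝ) = ∏ n, (inner ℝ (v n) (w n) : ℝ) := by
  simp only [PiLp.inner_apply, RCLike.inner_apply, starRingEnd_apply, star_trivial,
    outer_apply]
  rw [Finset.prod_univ_sum, Fintype.piFinset_univ]
  refine Finset.sum_congr rfl fun i _ => ?_
  rw [Finset.prod_mul_distrib]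

lemma inner_matVec {m : ℕ} {M : Matrix (Fin m) (Fin m) ℝ} (hM : Mᵀ * M = 1)
    (v w : EuclideanSpace ℝ (Fin m)) :
    (inner ℝ (matVec M v) (matVec M w) : ℝ) = inner ℝ v w := by
  have h : ∀ j k, (∑ i, M i j * M i k) = (1 : Matrix (Fin m) (Fin m) ℝ) j k := by
    intro j k; rw [← hM]; simp [Matrix.mul_apply, Matrix.transpose_apply]
  rw [← real_inner_comm (matVec M v), ← real_inner_comm v]
  simp only [PiLp.inner_apply, RCLike.inner_apply, starRingEnd_apply, star_trivial,
    matVec_apply]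
  calc ∑ i, (∑ j, M i j * v j) * ∑ k, M i k * w k
      = ∑ i, ∑ j, ∑ k, (M i j * M i k) * (v j * w k) := by
        refine Finset.sum_congr rfl fun i _ => ?_
        rw [Finset.sum_mul_sum]
        exact Finset.sum_congr rfl fun j _ => Finset.sum_congr rfl fun k _ => by ring
    _ = ∑ j, ∑ k, (∑ i, M i j * M i k) * (v j * w k) := by
        rw [Finset.sum_comm]
        refine Finset.sum_congr rfl fun j _ => ?_
        rw [Finset.sum_comm]
        refine Finset.sum_congr rfl fun k _ => ?_
        rw [Finset.sum_mul]
    _ = ∑ j, v j * w j := by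
        refine Finset.sum_congr rfl fun j _ => ?_
        simp only [h, Matrix.one_apply]
        simp [Finset.sum_ite_eq]

lemma mlMul_mlMul (M M' : (n : Fin N) → Matrix (Fin (I n)) (Fin (I n)) ℝ)
    (A : EuclideanSpace ℝ ((n : Fin N) → Fin (I n))) :
    mlMul M (mlMul M' A) = mlMul (fun n => M n * M' n) A := by
  ext i
  simp only [mlMul_apply, Matrix.mul_apply]
  calc ∑ j : (n : Fin N) → Fin (I n), (∏ n, M n (i n) (j n)) *
        ∑ k : (n : Fin N) → Fin (I n), (∏ n, M' n (j n) (k n)) * A k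
      = ∑ j : (n : Fin N) → Fin (I n), ∑ k : (n : Fin N) → Fin (I n),
          (∏ n, M n (i n) (j n) * M' n (j n) (k n)) * A k := by
        refine Finset.sum_congr rfl fun j _ => ?_
        rw [Finset.mul_sum]
        refine Finset.sum_congr rfl fun k _ => ?_
        rw [← mul_assoc, Finset.prod_mul_distrib]
    _ = ∑ k : (n : Fin N) → Fin (I n),
          (∏ n, ∑ jn, M n (i n) jn * M' n jn (k n)) * A k := by
        rw [Finset.sum_comm]
        refine Finset.sum_congr rfl fun k _ => ?_
        rw [← Finset.sum_mul]
        congr 1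
        rw [Finset.prod_univ_sum, Fintype.piFinset_univ]

lemma mlMul_one (A : EuclideanSpace ℝ ((n : Fin N) → Fin (I n))) :
    mlMul (fun _ => (1 : Matrix _ _ ℝ)) A = A := by
  ext i
  rw [mlMul_apply]
  have : ∀ j : (n : Fin N) → Fin (I n),
      (∏ n, (1 : Matrix (Fin (I n)) (Fin (I n)) ℝ) (i n) (j n)) = if i = j then 1 else 0 := by
    intro j
    simp only [Matrix.one_apply]
    rw [Finset.prod_boole]
    congr 1
    simp [funext_iff, eq_comm]
  simp only [this, ite_mul, one_mul, zero_mul]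
  simp

/-- Membership transfer for the orank set. -/
lemma orank_set_mem (M : (n : Fin N) → Matrix (Fin (I n)) (Fin (I n)) ℝ)
    (hM : ∀ n, (M n)ᵀ * M n = 1)
    (A : EuclideanSpace ℝ ((n : Fin N) → Fin (I n))) (R : ℕ)
    (h : ∃ v : Fin R → (n : Fin N) → EuclideanSpace ℝ (Fin (I n)),
      A = ∑ r, outer (v r) ∧
      ∀ s t : Fin R, s ≠ t → (inner ℝ (outer (v s)) (outer (v t)) : ℝ) = 0) :
    ∃ v : Fin R → (n : Fin N) → EuclideanSpace ℝ (Fin (I n)),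
      mlMul M A = ∑ r, outer (v r) ∧
      ∀ s t : Fin R, s ≠ t → (inner ℝ (outer (v s)) (outer (v t)) : ℝ) = 0 := by
  obtain ⟨v, hA, horth⟩ := h
  refine ⟨fun r n => matVec (M n) (v r n), ?_, ?_⟩
  · rw [hA, mlMul_sum]
    refine Finset.sum_congr rfl fun r _ => ?_
    exact mlMul_outer M (v r)
  · intro s t hst
    rw [inner_outer]
    have := horth s t hst
    rw [inner_outer] at this
    calc (∏ n, (inner ℝ (matVec (M n) (v s n)) (matVec (M n) (v t n)) : ℝ))
        = ∏ n, (inner ℝ (v s n) (v t n) : ℝ) :=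
          Finset.prod_congr rfl fun n _ => inner_matVec (hM n) _ _
      _ = 0 := this

end Aux

/-- Orthogonal rank is invariant under multiplication by orthogonal matrices in
every mode. -/
theorem orank_mlMul {N : ℕ} {I : Fin N → ℕ}
    (M : (n : Fin N) → Matrix (Fin (I n)) (Fin (I n)) ℝ)
    (hM : ∀ n, (M n)ᵀ * M n = 1)
    (A : EuclideanSpace ℝ ((n : Fin N) → Fin (I n))) :
    orank (mlMul M A) = orank A := by
  have hMT : ∀ n, ((M n)ᵀ)ᵀ * (M n)ᵀ = 1 := by
    intro n
    rw [Matrix.transpose_transpose, mul_eq_one_comm]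
    exact hM n
  have hback : mlMul (fun n => (M n)ᵀ) (mlMul M A) = A := by
    rw [mlMul_mlMul]
    have : (fun n => (M n)ᵀ * M n) = fun _ => (1 : Matrix _ _ ℝ) := funext fun n => hM n
    rw [show (fun n => (M n)ᵀ * M n) = (fun n => (1 : Matrix (Fin (I n)) (Fin (I n)) ℝ)) from
      funext fun n => hM n]
    exact mlMul_one A
  unfold orank
  congr 1
  ext R
  constructor
  · intro h
    have := orank_set_mem (fun n => (M n)ᵀ) hMT (mlMul M A) R h
    rwa [hback] at this
  · intro h
    exact orank_set_mem M hM A R h
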